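/- arXiv:1109.1945 — 2 statements merged into one kernel-verified Lean document; each statement's English description precedes it below -/
import Mathlib

section
/- With the same setup: for J = J' ∪ J'' with every element of J' less than every element of J'', the identity τ⁻_J = τ⁻_{J'} τ⁺_{J''} + (−1)^{#J'} τ⁺_{J'} τ⁻_{J''} holds in the free algebra A. -/
/-!
Since `J'` lies entirely below `J''`, a subset `I ⊆ J` is the disjoint union of `I' = I ∩ J'` and
`I'' = I ∩ J''`, the monomial factors as `t_{J∖I} = t_{J'∖I'} t_{J''∖I''}`, and
`ℓ_J(I) = ℓ_{J'}(I') + ℓ_{J''}(I'') + #I'' · #(J'∖I')`. So `#I` is odd exactly when one of `#I'`,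
`#I''` is odd and the other even, and the extra sign `(-1)^{#I'' · #(J'∖I')}` is `1` when `#I''` is
even and `(-1)^{#J'}` when `#I''` is odd and `#I'` even.
-/

/-- The ordered monomial `t_J = t_{j_1} ⋯ t_{j_{#J}}` in the free algebra. -/
noncomputable def tMon (R : Type*) [CommRing R] {S : Type*} [LinearOrder S] (J : Finset S) :
    FreeAlgebra R S :=
  ((J.sort (· ≤ ·)).map (FreeAlgebra.ι R)).prod

/-- `ℓ_J(I) = Σ_ν (α_ν - ν) = Σ_{i ∈ I} #{j ∈ J \ I : j < i}`. -/
def ellJ {S : Type*} [LinearOrder S] (J I : Finset S) : ℕ :=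
  ∑ i ∈ I, ((J \ I).filter (· < i)).card

/-- `τ⁻_J = Σ_{I ⊆ J, #I odd} (-1)^{ℓ_J(I)} (-q)^{(#I-1)/2} t_{J∖I}`. -/
noncomputable def tauMinus (R : Type*) [CommRing R] {S : Type*} [LinearOrder S] (q : R)
    (J : Finset S) : FreeAlgebra R S :=
  ∑ I ∈ J.powerset.filter fun I => ¬ 2 ∣ I.card,
    ((-1 : R) ^ ellJ J I * (-q) ^ ((I.card - 1) / 2)) • tMon R (J \ I)

/-- `τ⁺_J = Σ_{I ⊆ J, #I even} (-1)^{ℓ_J(I)} (-q)^{#I/2} t_{J∖I}`. -/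
noncomputable def tauPlus (R : Type*) [CommRing R] {S : Type*} [LinearOrder S] (q : R)
    (J : Finset S) : FreeAlgebra R S :=
  ∑ I ∈ J.powerset.filter fun I => 2 ∣ I.card,
    ((-1 : R) ^ ellJ J I * (-q) ^ (I.card / 2)) • tMon R (J \ I)

section

variable {S : Type*} [LinearOrder S] {R : Type*} [CommRing R]

lemma Finset.disjoint_of_forall_lt {A B : Finset S} (h : ∀ a ∈ A, ∀ b ∈ B, a < b) :
    Disjoint A B :=
  Finset.disjoint_left.mpr fun a ha hb => lt_irrefl a (h a ha a hb)

lemma Finset.sort_union_of_forall_lt {A B : Finset S} (h : ∀ a ∈ A, ∀ b ∈ B, a < b) :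
    (A ∪ B).sort (· ≤ ·) = A.sort (· ≤ ·) ++ B.sort (· ≤ ·) := by
  refine List.Perm.eq_of_pairwise' (Finset.pairwise_sort _ _) ?_ ?_
  · refine List.pairwise_append.mpr ⟨Finset.pairwise_sort _ _, Finset.pairwise_sort _ _, ?_⟩
    exact fun a ha b hb => (h a ((Finset.mem_sort _).mp ha) b ((Finset.mem_sort _).mp hb)).le
  · rw [← Multiset.coe_eq_coe, ← Multiset.coe_add, Finset.sort_eq, Finset.sort_eq, Finset.sort_eq,
      ← Finset.disjUnion_eq_union A B (Finset.disjoint_of_forall_lt h)]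
    rfl

lemma tMon_union_of_forall_lt {A B : Finset S} (h : ∀ a ∈ A, ∀ b ∈ B, a < b) :
    tMon R (A ∪ B) = tMon R A * tMon R B := by
  rw [tMon, Finset.sort_union_of_forall_lt h, List.map_append, List.prod_append, tMon, tMon]

lemma Finset.union_sdiff_union_of_disjoint {α : Type*} [DecidableEq α] {A B C D : Finset α}
    (hAD : Disjoint A D) (hBC : Disjoint B C) : (A ∪ B) \ (C ∪ D) = A \ C ∪ B \ D := by
  ext x
  have hA : x ∈ A → x ∉ D := fun h => Finset.disjoint_left.mp hAD h
  have hB : x ∈ B → x ∉ C := fun h => Finset.disjoint_left.mp hBC h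
  simp only [Finset.mem_sdiff, Finset.mem_union]
  tauto

lemma Finset.sum_powerset_union_of_disjoint {α M : Type*} [DecidableEq α] [AddCommMonoid M]
    {A B : Finset α} (hd : Disjoint A B) (f : Finset α → M) :
    ∑ I ∈ (A ∪ B).powerset, f I = ∑ I' ∈ A.powerset, ∑ I'' ∈ B.powerset, f (I' ∪ I'') := by
  rw [← Finset.sum_product']
  refine Finset.sum_nbij' (fun I => (I ∩ A, I ∩ B)) (fun p => p.1 ∪ p.2) ?_ ?_ ?_ ?_ ?_
  · intro I _
    simp only [Finset.mem_product, Finset.mem_powerset]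
    exact ⟨Finset.inter_subset_right, Finset.inter_subset_right⟩
  · intro p hp
    simp only [Finset.mem_product, Finset.mem_powerset] at hp ⊢
    exact Finset.union_subset_union hp.1 hp.2
  · intro I hI
    rw [Finset.mem_powerset] at hI
    rw [← Finset.inter_union_distrib_left, Finset.inter_eq_left.mpr hI]
  · rintro ⟨I', I''⟩ hp
    simp only [Finset.mem_product, Finset.mem_powerset] at hp
    rw [Finset.union_inter_distrib_right, Finset.union_inter_distrib_right,
      Finset.inter_eq_left.mpr hp.1, Finset.inter_eq_left.mpr hp.2,
      Finset.disjoint_iff_inter_eq_empty.mp (hd.symm.mono_left hp.2),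
      Finset.disjoint_iff_inter_eq_empty.mp (hd.mono_left hp.1),
      Finset.union_empty, Finset.empty_union]
  · intro I hI
    rw [Finset.mem_powerset] at hI
    rw [← Finset.inter_union_distrib_left, Finset.inter_eq_left.mpr hI]

/-- Every element of `I''` has all of `J' \ I'` below it, which produces the cross term. -/
lemma ellJ_union_of_forall_lt {J' J'' I' I'' : Finset S} (hI' : I' ⊆ J') (hI'' : I'' ⊆ J'')
    (hlt : ∀ j' ∈ J', ∀ j'' ∈ J'', j' < j'') :
    ellJ (J' ∪ J'') (I' ∪ I'') = ellJ J' I' + ellJ J'' I'' + I''.card * (J'.card - I'.card) := by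
  have hd := Finset.disjoint_of_forall_lt hlt
  have hsd : (J' ∪ J'') \ (I' ∪ I'') = J' \ I' ∪ J'' \ I'' :=
    Finset.union_sdiff_union_of_disjoint (hd.mono_right hI'') (hd.symm.mono_right hI')
  have below_I' : ∀ i ∈ I', (J' \ I' ∪ J'' \ I'').filter (· < i) = (J' \ I').filter (· < i) := by
    intro i hi
    have hnone : (J'' \ I'').filter (· < i) = ∅ := Finset.filter_eq_empty_iff.mpr
      fun x hx => not_lt.mpr (hlt i (hI' hi) x (Finset.mem_sdiff.mp hx).1).le
    rw [Finset.filter_union, hnone, Finset.union_empty]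
  have below_I'' : ∀ i ∈ I'', (J' \ I' ∪ J'' \ I'').filter (· < i)
      = J' \ I' ∪ (J'' \ I'').filter (· < i) := by
    intro i hi
    rw [Finset.filter_union, Finset.filter_eq_self.mpr]
    exact fun x hx => hlt x (Finset.mem_sdiff.mp hx).1 i (hI'' hi)
  have hd' : Disjoint (J' \ I') (J'' \ I'') := hd.mono Finset.sdiff_subset Finset.sdiff_subset
  rw [ellJ, ellJ, ellJ, Finset.sum_union (hd.mono hI' hI''), hsd,
    Finset.sum_congr rfl fun i hi => congrArg Finset.card (below_I' i hi),
    Finset.sum_congr rfl fun i hi => congrArg Finset.card (below_I'' i hi)]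
  simp only [Finset.card_union_of_disjoint (hd'.mono_right (Finset.filter_subset _ _)),
    Finset.card_sdiff_of_subset hI', Finset.sum_add_distrib, Finset.sum_const, smul_eq_mul]
  ring

end

section

variable {R : Type*} [CommRing R]

def tauMinusCoeff (q : R) (l c : ℕ) : R :=
  if ¬ 2 ∣ c then (-1) ^ l * (-q) ^ ((c - 1) / 2) else 0

def tauPlusCoeff (q : R) (l c : ℕ) : R :=
  if 2 ∣ c then (-1) ^ l * (-q) ^ (c / 2) else 0

lemma tauMinus_eq_sum_powerset {S : Type*} [LinearOrder S] (q : R) (J : Finset S) :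
    tauMinus R q J = ∑ I ∈ J.powerset, tauMinusCoeff q (ellJ J I) I.card • tMon R (J \ I) := by
  rw [tauMinus, Finset.sum_filter]
  refine Finset.sum_congr rfl fun I _ => ?_
  rw [tauMinusCoeff]
  split_ifs <;> simp

lemma tauPlus_eq_sum_powerset {S : Type*} [LinearOrder S] (q : R) (J : Finset S) :
    tauPlus R q J = ∑ I ∈ J.powerset, tauPlusCoeff q (ellJ J I) I.card • tMon R (J \ I) := by
  rw [tauPlus, Finset.sum_filter]
  refine Finset.sum_congr rfl fun I _ => ?_
  rw [tauPlusCoeff]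
  split_ifs <;> simp

lemma tauMinusCoeff_add (q : R) (l₁ l₂ : ℕ) {c₁ c₂ m : ℕ} (hc : c₁ ≤ m) :
    tauMinusCoeff q (l₁ + l₂ + c₂ * (m - c₁)) (c₁ + c₂)
      = tauMinusCoeff q l₁ c₁ * tauPlusCoeff q l₂ c₂
        + (-1) ^ m * (tauPlusCoeff q l₁ c₁ * tauMinusCoeff q l₂ c₂) := by
  obtain ⟨n, rfl⟩ := Nat.exists_eq_add_of_le hc
  rw [Nat.add_sub_cancel_left, tauMinusCoeff, tauMinusCoeff, tauMinusCoeff, tauPlusCoeff,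
    tauPlusCoeff]
  obtain ⟨k₁, rfl | rfl⟩ := Nat.even_or_odd' c₁ <;> obtain ⟨k₂, rfl | rfl⟩ := Nat.even_or_odd' c₂
  · simp [show 2 ∣ 2 * k₁ + 2 * k₂ by omega]
  · rw [show (2 * k₁ + (2 * k₂ + 1) - 1) / 2 = k₁ + k₂ by omega]
    simp [show ¬ 2 ∣ 2 * k₁ + (2 * k₂ + 1) by omega, pow_add, pow_mul]
    ring
  · rw [show (2 * k₁ + 1 + 2 * k₂ - 1) / 2 = k₁ + k₂ by omega]
    simp [show ¬ 2 ∣ 2 * k₁ + 1 + 2 * k₂ by omega, pow_add, pow_mul]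
    ring
  · simp [show 2 ∣ 2 * k₁ + 1 + (2 * k₂ + 1) by omega]

end

theorem stmt1_general {S : Type*} [LinearOrder S] {R : Type*} [CommRing R] (q : R)
    (J J' J'' : Finset S) (hJ : J = J' ∪ J'')
    (hlt : ∀ j' ∈ J', ∀ j'' ∈ J'', j' < j'') :
    tauMinus R q J = tauMinus R q J' * tauPlus R q J''
      + ((-1 : R) ^ J'.card) • (tauPlus R q J' * tauMinus R q J'') := by
  subst hJ
  have hd := Finset.disjoint_of_forall_lt hlt
  simp only [tauMinus_eq_sum_powerset, tauPlus_eq_sum_powerset,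
    Finset.sum_powerset_union_of_disjoint hd, Finset.sum_mul_sum, Finset.smul_sum,
    ← Finset.sum_add_distrib]
  refine Finset.sum_congr rfl fun I' hI' => Finset.sum_congr rfl fun I'' hI'' => ?_
  rw [Finset.mem_powerset] at hI' hI''
  rw [ellJ_union_of_forall_lt hI' hI'' hlt, Finset.card_union_of_disjoint (hd.mono hI' hI''),
    Finset.union_sdiff_union_of_disjoint (hd.mono_right hI'') (hd.symm.mono_right hI'),
    tMon_union_of_forall_lt fun a ha b hb =>
      hlt a (Finset.mem_sdiff.mp ha).1 b (Finset.mem_sdiff.mp hb).1,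
    smul_mul_smul_comm, smul_mul_smul_comm, smul_smul, ← add_smul,
    tauMinusCoeff_add q _ _ (Finset.card_le_card hI')]

theorem stmt1 {S : Type*} [Fintype S] [LinearOrder S] {R : Type*} [CommRing R] (q : R)
    (J J' J'' : Finset S) (hJ : J = J' ∪ J'')
    (hlt : ∀ j' ∈ J', ∀ j'' ∈ J'', j' < j'') :
    tauMinus R q J = tauMinus R q J' * tauPlus R q J''
      + ((-1 : R) ^ J'.card) • (tauPlus R q J' * tauMinus R q J'') :=
  stmt1_general q J J' J'' hJ hlt
end

section
/- Let I_q(∅) be the two-sided ideal of A generated by the elements t_s² − q (s ∈ S) and t_r t_s + t_s t_r − 2q (s < r in S). Then for every J ⊆ S and s ∈ J, both t_s τ⁺_J − q τ⁻_J and t_s τ⁻_J − τ⁺_J lie in I_q(∅). -/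
/-- Generators of the ideal `I_q(𝔐)`. -/
def gens (R : Type*) [CommRing R] {S : Type*} [LinearOrder S] (q : R) (M : Set (Finset S)) :
    Set (FreeAlgebra R S) :=
  (Set.range fun s : S => FreeAlgebra.ι R s ^ 2 - algebraMap R _ q) ∪
  {x | ∃ r s : S, s < r ∧
      x = FreeAlgebra.ι R r * FreeAlgebra.ι R s + FreeAlgebra.ι R s * FreeAlgebra.ι R r
        - 2 * algebraMap R _ q} ∪
  {x | ∃ J ∈ M, x = tauMinus R q J}

/-- The two-sided ideal `I_q(𝔐)` of the free algebra. -/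
noncomputable def Iq (R : Type*) [CommRing R] {S : Type*} [LinearOrder S] (q : R)
    (M : Set (Finset S)) : TwoSidedIdeal (FreeAlgebra R S) :=
  TwoSidedIdeal.span (gens R q M)

open Finset

lemma Finset.sum_powerset_insert_filter_card {α β : Type*} [DecidableEq α] [AddCommMonoid β]
    {a : α} {s : Finset α} (ha : a ∉ s) (p : ℕ → Prop) [DecidablePred p]
    (f : Finset α → β) :
    ∑ t ∈ (insert a s).powerset with p #t, f t =
      ∑ t ∈ s.powerset with p #t, f t + ∑ t ∈ s.powerset with p (#t + 1), f (insert a t) := by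
  simp only [sum_filter]
  rw [sum_powerset_insert ha]
  congr 1
  refine sum_congr rfl fun t ht => ?_
  rw [card_insert_of_notMem fun h => ha (mem_powerset.1 ht h)]

section Tau

variable {S : Type*} [LinearOrder S] {R : Type*} [CommRing R]

-- The common summand of `τ⁺_J` and `τ⁻_J`: for odd `#I`, `(#I - 1) / 2 = #I / 2`.
variable (R) in
noncomputable def tauTerm (q : R) (J I : Finset S) : FreeAlgebra R S :=
  ((-1 : R) ^ ellJ J I * (-q) ^ (#I / 2)) • tMon R (J \ I)

lemma tauPlus_eq_sum (q : R) (J : Finset S) :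
    tauPlus R q J = ∑ I ∈ J.powerset with 2 ∣ #I, tauTerm R q J I :=
  rfl

lemma tauMinus_eq_sum (q : R) (J : Finset S) :
    tauMinus R q J = ∑ I ∈ J.powerset with ¬ 2 ∣ #I, tauTerm R q J I := by
  refine sum_congr rfl fun I hI => ?_
  rw [tauTerm, show (#I - 1) / 2 = #I / 2 by have := (mem_filter.1 hI).2; omega]

section Insert

variable {m : S} {J : Finset S} (hlt : ∀ x ∈ J, m < x)
include hlt

lemma notMem_of_forall_lt : m ∉ J := fun h => lt_irrefl m (hlt m h)

lemma tMon_insert_of_forall_lt : tMon R (insert m J) = FreeAlgebra.ι R m * tMon R J := by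
  rw [tMon, sort_insert (· ≤ ·) (fun b hb => (hlt b hb).le) (notMem_of_forall_lt hlt),
    List.map_cons, List.prod_cons, tMon]

lemma ellJ_insert_insert {I : Finset S} (hI : I ⊆ J) :
    ellJ (insert m J) (insert m I) = ellJ J I := by
  have hm := notMem_of_forall_lt hlt
  have hnone : #{j ∈ J \ I | j < m} = 0 := by
    rw [card_eq_zero, filter_eq_empty_iff]
    exact fun x hx => (hlt x (mem_sdiff.1 hx).1).not_gt
  rw [ellJ, sum_insert (fun h => hm (hI h)), insert_sdiff_insert, sdiff_insert_of_notMem hm,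
    hnone, zero_add, ellJ]

lemma ellJ_insert_of_subset {I : Finset S} (hI : I ⊆ J) :
    ellJ (insert m J) I = ellJ J I + #I := by
  have hm := notMem_of_forall_lt hlt
  have hone : ∀ i ∈ I, #{j ∈ insert m (J \ I) | j < i} = #{j ∈ J \ I | j < i} + 1 :=
    fun i hi => by
      rw [filter_insert, if_pos (hlt i (hI hi)),
        card_insert_of_notMem fun h => hm (mem_sdiff.1 (mem_filter.1 h).1).1]
  rw [ellJ, insert_sdiff_of_notMem _ fun h => hm (hI h), sum_congr rfl hone, sum_add_distrib,
    sum_const, smul_eq_mul, mul_one, ellJ]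

lemma tauTerm_insert_of_subset (q : R) {I : Finset S} (hI : I ⊆ J) :
    tauTerm R q (insert m J) I = (-1 : R) ^ #I • (FreeAlgebra.ι R m * tauTerm R q J I) := by
  have hm := notMem_of_forall_lt hlt
  rw [tauTerm, tauTerm, ellJ_insert_of_subset hlt hI,
    insert_sdiff_of_notMem _ fun h => hm (hI h),
    tMon_insert_of_forall_lt fun x hx => hlt x (mem_sdiff.1 hx).1, mul_smul_comm, smul_smul,
    pow_add]
  congr 1; ring

lemma tauTerm_insert_insert (q : R) {I : Finset S} (hI : I ⊆ J) :
    tauTerm R q (insert m J) (insert m I) = (-q) ^ (#I % 2) • tauTerm R q J I := by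
  have hm := notMem_of_forall_lt hlt
  rw [tauTerm, tauTerm, ellJ_insert_insert hlt hI, insert_sdiff_insert, sdiff_insert_of_notMem hm,
    card_insert_of_notMem fun h => hm (hI h), smul_smul,
    show (#I + 1) / 2 = #I / 2 + #I % 2 by omega, pow_add]
  congr 1; ring

theorem tauPlus_insert (q : R) :
    tauPlus R q (insert m J) =
      FreeAlgebra.ι R m * tauPlus R q J - q • tauMinus R q J := by
  rw [tauPlus_eq_sum, sum_powerset_insert_filter_card (notMem_of_forall_lt hlt), tauPlus_eq_sum,
    tauMinus_eq_sum, mul_sum, smul_sum, sub_eq_add_neg, ← sum_neg_distrib]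
  congr 1
  · refine sum_congr rfl fun I hI => ?_
    obtain ⟨hIJ, hpar⟩ := mem_filter.1 hI
    rw [tauTerm_insert_of_subset hlt q (mem_powerset.1 hIJ),
      (even_iff_two_dvd.2 hpar).neg_one_pow, one_smul]
  · refine sum_congr (filter_congr fun I _ => by omega) fun I hI => ?_
    obtain ⟨hIJ, hpar⟩ := mem_filter.1 hI
    rw [tauTerm_insert_insert hlt q (mem_powerset.1 hIJ), show #I % 2 = 1 by omega, pow_one,
      neg_smul]

theorem tauMinus_insert (q : R) :
    tauMinus R q (insert m J) = tauPlus R q J - FreeAlgebra.ι R m * tauMinus R q J := by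
  rw [tauMinus_eq_sum, sum_powerset_insert_filter_card (notMem_of_forall_lt hlt) (¬ 2 ∣ ·),
    tauPlus_eq_sum, tauMinus_eq_sum, mul_sum, sub_eq_neg_add, ← sum_neg_distrib]
  congr 1
  · refine sum_congr rfl fun I hI => ?_
    obtain ⟨hIJ, hpar⟩ := mem_filter.1 hI
    rw [tauTerm_insert_of_subset hlt q (mem_powerset.1 hIJ),
      (Nat.odd_iff.2 (by omega)).neg_one_pow, neg_one_smul]
  · refine sum_congr (filter_congr fun I _ => by omega) fun I hI => ?_
    obtain ⟨hIJ, hpar⟩ := mem_filter.1 hI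
    rw [tauTerm_insert_insert hlt q (mem_powerset.1 hIJ), show #I % 2 = 0 by omega, pow_zero,
      one_smul]

end Insert

section Relations

variable {B : Type*} [Ring B] [Algebra R B] (q : R) (f : FreeAlgebra R S →ₐ[R] B)

theorem map_ι_mul_tauPlus_tauMinus
    (hsq : ∀ s, f (FreeAlgebra.ι R s) * f (FreeAlgebra.ι R s) = algebraMap R B q)
    (hanti : ∀ r s, s < r → f (FreeAlgebra.ι R r) * f (FreeAlgebra.ι R s)
      + f (FreeAlgebra.ι R s) * f (FreeAlgebra.ι R r) = 2 * algebraMap R B q)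
    (J : Finset S) : ∀ s ∈ J,
      f (FreeAlgebra.ι R s) * f (tauPlus R q J) = q • f (tauMinus R q J) ∧
        f (FreeAlgebra.ι R s) * f (tauMinus R q J) = f (tauPlus R q J) := by
  induction J using Finset.induction_on_min with
  | empty => simp
  | insert m J hlt ih =>
    rw [tauPlus_insert hlt, tauMinus_insert hlt]
    simp only [map_sub, map_mul, map_smul]
    rintro s hs
    rcases mem_insert.1 hs with rfl | hsJ
    · simp [mul_sub, ← mul_assoc, hsq, Algebra.algebraMap_eq_smul_one, smul_sub]
    · obtain ⟨hP, hM⟩ := ih s hsJ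
      have hswap := eq_sub_of_add_eq (hanti s m (hlt s hsJ))
      simp only [mul_sub, mul_smul_comm, ← mul_assoc, hswap, Algebra.algebraMap_eq_smul_one,
        sub_mul, smul_mul_assoc, smul_sub]
      simp only [mul_assoc, hP, hM, mul_smul_comm, two_mul, add_mul, one_mul]
      constructor <;> module

end Relations

section Quotient

variable (q : R) (M : Set (Finset S))

lemma mem_Iq_iff {x : FreeAlgebra R S} : x ∈ Iq R q M ↔ (Iq R q M).ringCon.mkₐ R x = 0 := by
  conv_lhs => rw [← TwoSidedIdeal.ker_ringCon_mk' (Iq R q M)]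
  exact TwoSidedIdeal.mem_ker _

lemma mkₐ_Iq_ι_mul_self (s : S) :
    (Iq R q M).ringCon.mkₐ R (FreeAlgebra.ι R s) *
      (Iq R q M).ringCon.mkₐ R (FreeAlgebra.ι R s) = algebraMap R _ q := by
  have h := (mem_Iq_iff q M).1 (TwoSidedIdeal.subset_span (Or.inl (Or.inl ⟨s, rfl⟩)))
  rwa [map_sub, pow_two, map_mul, AlgHom.commutes, sub_eq_zero] at h

lemma mkₐ_Iq_anticomm {r s : S} (hsr : s < r) :
    (Iq R q M).ringCon.mkₐ R (FreeAlgebra.ι R r) * (Iq R q M).ringCon.mkₐ R (FreeAlgebra.ι R s)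
      + (Iq R q M).ringCon.mkₐ R (FreeAlgebra.ι R s) * (Iq R q M).ringCon.mkₐ R (FreeAlgebra.ι R r)
      = 2 * algebraMap R _ q := by
  have h := (mem_Iq_iff q M).1 (TwoSidedIdeal.subset_span (Or.inl (Or.inr ⟨r, s, hsr, rfl⟩)))
  rwa [map_sub, map_add, map_mul, map_mul, map_mul, map_ofNat, AlgHom.commutes, sub_eq_zero] at h

end Quotient

end Tau

theorem stmt6_general {S : Type*} [LinearOrder S] {R : Type*} [CommRing R] (q : R)
    (J : Finset S) (s : S) (hs : s ∈ J) :
    FreeAlgebra.ι R s * tauPlus R q J - q • tauMinus R q J ∈ Iq R q (∅ : Set (Finset S)) ∧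
    FreeAlgebra.ι R s * tauMinus R q J - tauPlus R q J ∈ Iq R q (∅ : Set (Finset S)) := by
  obtain ⟨hPlus, hMinus⟩ := map_ι_mul_tauPlus_tauMinus q _ (mkₐ_Iq_ι_mul_self q ∅)
    (fun _ _ => mkₐ_Iq_anticomm q ∅) J s hs
  simp only [mem_Iq_iff, map_sub, map_mul, map_smul, hPlus, hMinus, sub_self, and_self]

theorem stmt6 {S : Type*} [Fintype S] [LinearOrder S] {R : Type*} [CommRing R] (q : R)
    (J : Finset S) (s : S) (hs : s ∈ J) :
    FreeAlgebra.ι R s * tauPlus R q J - q • tauMinus R q J ∈ Iq R q (∅ : Set (Finset S)) ∧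
    FreeAlgebra.ι R s * tauMinus R q J - tauPlus R q J ∈ Iq R q (∅ : Set (Finset S)) :=
  stmt6_general q J s hs
end
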